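/- Let n ≥ 1 and let Φ be a holomorphic map from the open upper half-plane {z ∈ ℂ : Im z > 0} to the n×n complex matrices such that for every z in the upper half-plane the matrix Φ(z) is symmetric (Φ(z)ᵀ = Φ(z)) and the matrix B(z) := (Φ(z) − Φ(z)*)/(2i) is positive definite. Then for every z = σ + iτ with τ > 0 and every vector v ∈ ℂⁿ, one has |v* Φ'(z) v| ≤ (1/τ) · v* B(z) v, i.e. ‖⟪v, Φ'(z) v⟫‖ ≤ (Im z)⁻¹ · Re(⟪v, B(z) v⟫). -/

import Mathlib

/-!
For a fixed vector `v`, `f w = v* Φ(w) v` is a scalar Herglotz function: `Im f(w) = v* B(w) v > 0`,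
and `f'(z) = v* Φ'(z) v`. The claim is thus the Schwarz–Pick inequality
`|f'(z)| ≤ Im f(z) / Im z` on the upper half-plane, which follows from the Schwarz lemma applied to
`f` conjugated by Möbius maps between the unit disk and the upper half-plane sending `0 ↦ z` and
`f(z) ↦ 0`.
-/

open Metric Set Matrix
open scoped ComplexOrder ComplexConjugate

namespace Complex

noncomputable def diskToUpperHalfPlane (z ζ : ℂ) : ℂ := (z - conj z * ζ) / (1 - ζ)

noncomputable def upperHalfPlaneToDisk (a w : ℂ) : ℂ := (w - a) / (w - conj a)

theorem im_diskToUpperHalfPlane (z ζ : ℂ) :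
    (diskToUpperHalfPlane z ζ).im = z.im * (1 - normSq ζ) / normSq (1 - ζ) := by
  simp only [diskToUpperHalfPlane, div_im, sub_re, sub_im, mul_re, mul_im, one_re, one_im,
    conj_re, conj_im, normSq_apply]
  ring

theorem diskToUpperHalfPlane_zero (z : ℂ) : diskToUpperHalfPlane z 0 = z := by
  simp [diskToUpperHalfPlane]

theorem im_diskToUpperHalfPlane_pos {z ζ : ℂ} (hz : 0 < z.im) (hζ : ‖ζ‖ < 1) :
    0 < (diskToUpperHalfPlane z ζ).im := by
  have hζ1 : 1 - ζ ≠ 0 := sub_ne_zero.2 fun h => by simp [← h] at hζ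
  rw [im_diskToUpperHalfPlane, normSq_eq_norm_sq]
  exact div_pos (mul_pos hz (by nlinarith [norm_nonneg ζ])) (normSq_pos.2 hζ1)

theorem differentiableAt_diskToUpperHalfPlane (z : ℂ) {ζ : ℂ} (hζ : ζ ≠ 1) :
    DifferentiableAt ℂ (diskToUpperHalfPlane z) ζ := by
  unfold diskToUpperHalfPlane
  fun_prop (disch := exact sub_ne_zero.2 hζ.symm)

theorem hasDerivAt_diskToUpperHalfPlane_zero (z : ℂ) :
    HasDerivAt (diskToUpperHalfPlane z) (z - conj z) 0 := by
  refine (((hasDerivAt_id' (0 : ℂ)).const_mul (conj z)).const_sub z |>.fun_div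
    ((hasDerivAt_id' (0 : ℂ)).const_sub 1) (by simp)).congr_deriv ?_
  simp [neg_add_eq_sub]

theorem upperHalfPlaneToDisk_self (a : ℂ) : upperHalfPlaneToDisk a a = 0 := by
  simp [upperHalfPlaneToDisk]

theorem norm_upperHalfPlaneToDisk_lt_one {a w : ℂ} (ha : 0 < a.im) (hw : 0 < w.im) :
    ‖upperHalfPlaneToDisk a w‖ < 1 := by
  have hden : w - conj a ≠ 0 := fun h => by
    have := congrArg im h; rw [sub_im, conj_im, zero_im] at this; linarith
  rw [upperHalfPlaneToDisk, norm_div, div_lt_one (norm_pos_iff.2 hden), norm_def, norm_def]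
  refine Real.sqrt_lt_sqrt (normSq_nonneg _) ?_
  simp only [normSq_apply, sub_re, sub_im, conj_re, conj_im]
  nlinarith [mul_pos hw ha]

theorem differentiableAt_upperHalfPlaneToDisk (a : ℂ) {w : ℂ} (hw : w ≠ conj a) :
    DifferentiableAt ℂ (upperHalfPlaneToDisk a) w := by
  unfold upperHalfPlaneToDisk
  fun_prop (disch := exact sub_ne_zero.2 hw)

theorem hasDerivAt_upperHalfPlaneToDisk_self {a : ℂ} (ha : a.im ≠ 0) :
    HasDerivAt (upperHalfPlaneToDisk a) (a - conj a)⁻¹ a := by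
  have hne : a - conj a ≠ 0 := by
    rw [sub_conj]; simpa [I_ne_zero] using ha
  refine (((hasDerivAt_id' a).sub_const a).fun_div
    ((hasDerivAt_id' a).sub_const (conj a)) hne).congr_deriv ?_
  field_simp
  ring

theorem norm_deriv_le_of_mapsTo_upperHalfPlane {f : ℂ → ℂ}
    (hd : DifferentiableOn ℂ f {w | 0 < w.im}) (hf : MapsTo f {w | 0 < w.im} {w | 0 < w.im})
    {z : ℂ} (hz : 0 < z.im) : ‖deriv f z‖ ≤ z.im⁻¹ * (f z).im := by
  have hopen : IsOpen {w : ℂ | 0 < w.im} := isOpen_lt continuous_const continuous_im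
  have ha : 0 < (f z).im := hf hz
  set g := upperHalfPlaneToDisk (f z) ∘ f ∘ diskToUpperHalfPlane z
  have hC : MapsTo (diskToUpperHalfPlane z) (ball 0 1) {w | 0 < w.im} := fun ζ hζ =>
    im_diskToUpperHalfPlane_pos hz (mem_ball_zero_iff.1 hζ)
  have hg_diff : DifferentiableOn ℂ g (ball 0 1) := fun ζ hζ => by
    have hζ1 : ζ ≠ 1 := fun h => by simp [h] at hζ
    have hne : f (diskToUpperHalfPlane z ζ) ≠ conj (f z) := fun h => by
      have := hf (hC hζ); rw [mem_ofPred_eq, h, conj_im] at this; linarith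
    exact ((differentiableAt_upperHalfPlaneToDisk _ hne).comp ζ
      ((hd.differentiableAt (hopen.mem_nhds (hC hζ))).comp ζ
        (differentiableAt_diskToUpperHalfPlane z hζ1))).differentiableWithinAt
  have hg_maps : MapsTo g (ball 0 1) (closedBall (g 0) 1) := fun ζ hζ => by
    rw [show g 0 = 0 by simp [g, diskToUpperHalfPlane_zero, upperHalfPlaneToDisk_self],
      mem_closedBall_zero_iff]
    exact (norm_upperHalfPlaneToDisk_lt_one ha (hf (hC hζ))).le
  have hg_deriv : HasDerivAt g ((f z - conj (f z))⁻¹ * (deriv f z * (z - conj z))) 0 := by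
    have hfz : HasDerivAt f (deriv f z) (diskToUpperHalfPlane z 0) := by
      rw [diskToUpperHalfPlane_zero]
      exact (hd.differentiableAt (hopen.mem_nhds hz)).hasDerivAt
    have hT : HasDerivAt (upperHalfPlaneToDisk (f z)) (f z - conj (f z))⁻¹
        ((f ∘ diskToUpperHalfPlane z) 0) := by
      simpa [diskToUpperHalfPlane_zero] using hasDerivAt_upperHalfPlaneToDisk_self ha.ne'
    exact hT.comp 0 (hfz.comp 0 (hasDerivAt_diskToUpperHalfPlane_zero z))
  have hSchwarz := norm_deriv_le_div_of_mapsTo_ball hg_diff hg_maps one_pos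
  rw [hg_deriv.deriv, div_one, norm_mul, norm_mul, norm_inv, sub_conj, sub_conj] at hSchwarz
  simp only [norm_mul, norm_real, norm_I, Real.norm_eq_abs, abs_of_pos ha,
    abs_of_pos hz, mul_one] at hSchwarz
  rw [inv_mul_eq_div, le_div_iff₀ hz]
  field_simp at hSchwarz
  linarith

end Complex

namespace Matrix

variable {ι : Type*} [Fintype ι]

theorem hasDerivAt_dotProduct_mulVec {𝕜 : Type*} [NontriviallyNormedField 𝕜] {κ : Type*}
    [Fintype κ] {Φ : 𝕜 → Matrix ι κ 𝕜} {Φ' : Matrix ι κ 𝕜} {z : 𝕜}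
    (h : ∀ i j, HasDerivAt (fun w => Φ w i j) (Φ' i j) z) (u : ι → 𝕜) (v : κ → 𝕜) :
    HasDerivAt (fun w => u ⬝ᵥ Φ w *ᵥ v) (u ⬝ᵥ Φ' *ᵥ v) z := by
  simp only [dotProduct, mulVec]
  exact HasDerivAt.fun_sum fun i _ => (HasDerivAt.fun_sum fun j _ =>
    (h i j).mul_const (v j)).const_mul (u i)

theorem star_dotProduct_conjTranspose_mulVec {R : Type*} [CommSemiring R] [StarRing R]
    (A : Matrix ι ι R) (v : ι → R) : star v ⬝ᵥ Aᴴ *ᵥ v = star (star v ⬝ᵥ A *ᵥ v) := by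
  rw [dotProduct_mulVec, ← star_mulVec, star_dotProduct]

theorem ofReal_im_star_dotProduct_mulVec (A : Matrix ι ι ℂ) (v : ι → ℂ) :
    ((star v ⬝ᵥ A *ᵥ v).im : ℂ) = star v ⬝ᵥ ((2 * Complex.I)⁻¹ • (A - Aᴴ)) *ᵥ v := by
  rw [smul_mulVec, dotProduct_smul, sub_mulVec, dotProduct_sub,
    star_dotProduct_conjTranspose_mulVec, Complex.star_def, Complex.sub_conj, smul_eq_mul]
  field_simp
  push_cast
  ring

end Matrix

theorem matrix_herglotz_deriv_quadratic_bound_general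
    (n : ℕ)
    (Φ Φ' : ℂ → Matrix (Fin n) (Fin n) ℂ)
    (hderiv : ∀ z : ℂ, 0 < z.im → ∀ i j : Fin n,
      HasDerivAt (fun w => Φ w i j) (Φ' z i j) z)
    (hpos : ∀ z : ℂ, 0 < z.im →
      ((2 * Complex.I)⁻¹ • (Φ z - (Φ z)ᴴ)).PosDef) :
    ∀ z : ℂ, 0 < z.im → ∀ v : Fin n → ℂ,
      ‖star v ⬝ᵥ (Φ' z).mulVec v‖ ≤
        (z.im)⁻¹ * (star v ⬝ᵥ (((2 * Complex.I)⁻¹ • (Φ z - (Φ z)ᴴ)).mulVec v)).re := by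
  intro z hz v
  rcases eq_or_ne v 0 with rfl | hv
  · simp
  set f : ℂ → ℂ := fun w => star v ⬝ᵥ Φ w *ᵥ v
  have hf : ∀ w : ℂ, 0 < w.im → HasDerivAt f (star v ⬝ᵥ Φ' w *ᵥ v) w := fun w hw =>
    hasDerivAt_dotProduct_mulVec (hderiv w hw) _ _
  have hf_maps : MapsTo f {w | 0 < w.im} {w | 0 < w.im} := fun w hw => by
    have := (hpos w hw).dotProduct_mulVec_pos hv
    rwa [← ofReal_im_star_dotProduct_mulVec, Complex.zero_lt_real] at this
  rw [← ofReal_im_star_dotProduct_mulVec, Complex.ofReal_re, ← (hf z hz).deriv]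
  exact Complex.norm_deriv_le_of_mapsTo_upperHalfPlane
    (fun w hw => (hf w hw).differentiableAt.differentiableWithinAt) hf_maps hz

/-- Matrix-valued Schwarz–Pick lemma (quadratic-form version): if `Φ` is a
holomorphic symmetric matrix-valued Herglotz function on the upper half-plane,
with `B z = (Φ z - (Φ z)ᴴ) / (2i)` positive definite, then for every `z` with
`Im z > 0` and every vector `v`, `|v* Φ'(z) v| ≤ (Im z)⁻¹ · (v* B(z) v)`. -/
theorem matrix_herglotz_deriv_quadratic_bound
    (n : ℕ) (hn : 1 ≤ n)
    (Φ Φ' : ℂ → Matrix (Fin n) (Fin n) ℂ)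
    (hderiv : ∀ z : ℂ, 0 < z.im → ∀ i j : Fin n,
      HasDerivAt (fun w => Φ w i j) (Φ' z i j) z)
    (hsym : ∀ z : ℂ, 0 < z.im → (Φ z)ᵀ = Φ z)
    (hpos : ∀ z : ℂ, 0 < z.im →
      ((2 * Complex.I)⁻¹ • (Φ z - (Φ z)ᴴ)).PosDef) :
    ∀ z : ℂ, 0 < z.im → ∀ v : Fin n → ℂ,
      ‖star v ⬝ᵥ (Φ' z).mulVec v‖ ≤
        (z.im)⁻¹ * (star v ⬝ᵥ (((2 * Complex.I)⁻¹ • (Φ z - (Φ z)ᴴ)).mulVec v)).re :=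
  matrix_herglotz_deriv_quadratic_bound_general n Φ Φ' hderiv hpos
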